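/- Let P and Q be two disjoint sets of prime numbers. For a set S of primes, let ℤ_S denote the subring of ℚ consisting of rationals whose denominator (in lowest terms) has all prime factors in S. Then for any abelian group G, the group homomorphism β : G → (G ⊗ ℤ_P) × (G ⊗ ℤ_Q) given by β(g) = (g ⊗ 1, g ⊗ 1) is injective. -/

import Mathlib

/-- For a set `S` of primes, the subring of `ℚ` consisting of rationals whose
denominator (in lowest terms) has all prime factors in `S`. -/
def ratDenSubring (S : Set ℕ) : Subring ℚ where
  carrier := {q : ℚ | ∀ p : ℕ, p.Prime → p ∣ q.den → p ∈ S}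
  zero_mem' := by
    intro p hp hdvd
    rw [Rat.den_zero, Nat.dvd_one] at hdvd
    exact absurd hdvd hp.ne_one
  one_mem' := by
    intro p hp hdvd
    rw [Rat.den_one, Nat.dvd_one] at hdvd
    exact absurd hdvd hp.ne_one
  add_mem' := by
    intro a b ha hb p hp hdvd
    rcases hp.dvd_mul.mp (hdvd.trans (Rat.add_den_dvd a b)) with h | h
    · exact ha p hp h
    · exact hb p hp h
  mul_mem' := by
    intro a b ha hb p hp hdvd
    rcases hp.dvd_mul.mp (hdvd.trans (Rat.mul_den_dvd a b)) with h | h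
    · exact ha p hp h
    · exact hb p hp h
  neg_mem' := by
    intro a ha p hp hdvd
    rw [Rat.den_neg_eq_den] at hdvd
    exact ha p hp hdvd

/-!
Since `ℤ_S` is the localization of `ℤ` at the nonzero integers with all prime factors in `S`,
`g ⊗ 1 = 0` in `G ⊗ ℤ_S` means that such an integer kills `g`. For disjoint `P` and `Q`, an integer
killing `g` of the first kind and one of the second kind are coprime, so a Bézout combination of
them is `1` and `g = 0`.
-/

open TensorProduct

lemma IsCoprime.eq_zero_of_smul_eq_zero {R M : Type*} [CommSemiring R] [AddCommMonoid M]
    [Module R M] {s t : R} (hst : IsCoprime s t) {m : M} (hs : s • m = 0) (ht : t • m = 0) :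
    m = 0 := by
  obtain ⟨a, b, hab⟩ := hst
  calc m = (a * s + b * t) • m := by rw [hab, one_smul]
    _ = 0 := by rw [add_smul, mul_smul, mul_smul, hs, ht, smul_zero, smul_zero, add_zero]

lemma exists_smul_eq_zero_of_tmul_one_eq_zero {R A M : Type*} [CommRing R] [CommRing A]
    [Algebra R A] (S : Submonoid R) [IsLocalization S A] [AddCommGroup M] [Module R M] {m : M}
    (h : m ⊗ₜ[R] (1 : A) = 0) : ∃ s ∈ S, s • m = 0 := by
  have h' : TensorProduct.mk R A M 1 m = 0 := by
    rw [TensorProduct.mk_apply, ← TensorProduct.comm_tmul, h, map_zero]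
  obtain ⟨⟨s, hs⟩, hsm⟩ := (IsLocalizedModule.eq_zero_iff S _).mp h'
  exact ⟨s, hs, hsm⟩

def primeSupportSubmonoid (S : Set ℕ) : Submonoid ℤ where
  carrier := {n | n ≠ 0 ∧ ∀ p : ℕ, p.Prime → p ∣ n.natAbs → p ∈ S}
  one_mem' := ⟨one_ne_zero, fun _ hp hdvd => absurd (Nat.dvd_one.mp hdvd) hp.ne_one⟩
  mul_mem' := by
    rintro a b ⟨ha0, ha⟩ ⟨hb0, hb⟩
    refine ⟨mul_ne_zero ha0 hb0, fun p hp hdvd => ?_⟩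
    rw [Int.natAbs_mul] at hdvd
    exact (hp.dvd_mul.mp hdvd).elim (ha p hp) (hb p hp)

instance isLocalization_ratDenSubring (S : Set ℕ) :
    IsLocalization (primeSupportSubmonoid S) (ratDenSubring S) where
  map_units := by
    rintro ⟨n, hn0, hn⟩
    refine IsUnit.of_mul_eq_one ⟨(n : ℚ)⁻¹, fun p hp hdvd => hn p hp ?_⟩ ?_
    · rwa [Rat.inv_intCast_den, if_neg hn0] at hdvd
    · ext
      simp [hn0]
  surj z := by
    refine ⟨((z : ℚ).num, ⟨(z : ℚ).den, Int.natCast_ne_zero.mpr (z : ℚ).den_nz, z.2⟩), ?_⟩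
    ext
    simp [Rat.mul_den_eq_num]
  exists_of_eq h := ⟨1, by simpa using h⟩

lemma isCoprime_of_mem_primeSupportSubmonoid {P Q : Set ℕ} (hPQ : Disjoint P Q) {s t : ℤ}
    (hs : s ∈ primeSupportSubmonoid P) (ht : t ∈ primeSupportSubmonoid Q) : IsCoprime s t :=
  Int.isCoprime_iff_gcd_eq_one.mpr <| Nat.coprime_of_dvd fun p hp hps hpt =>
    hPQ.ne_of_mem (hs.2 p hp hps) (ht.2 p hp hpt) rfl

theorem localization_pair_injective_general (P Q : Set ℕ) (hPQ : Disjoint P Q)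
    (G : Type*) [AddCommGroup G] :
    Function.Injective (fun g : G =>
      ((TensorProduct.tmul ℤ g (1 : ratDenSubring P) :
          TensorProduct ℤ G (ratDenSubring P)),
       (TensorProduct.tmul ℤ g (1 : ratDenSubring Q) :
          TensorProduct ℤ G (ratDenSubring Q)))) := by
  intro g₁ g₂ h
  obtain ⟨hP, hQ⟩ := Prod.mk.inj h
  have hP0 : (g₁ - g₂) ⊗ₜ[ℤ] (1 : ratDenSubring P) = 0 := by rw [sub_tmul, hP, sub_self]
  have hQ0 : (g₁ - g₂) ⊗ₜ[ℤ] (1 : ratDenSubring Q) = 0 := by rw [sub_tmul, hQ, sub_self]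
  obtain ⟨s, hs, hsg⟩ := exists_smul_eq_zero_of_tmul_one_eq_zero (primeSupportSubmonoid P) hP0
  obtain ⟨t, ht, htg⟩ := exists_smul_eq_zero_of_tmul_one_eq_zero (primeSupportSubmonoid Q) hQ0
  exact sub_eq_zero.mp <|
    (isCoprime_of_mem_primeSupportSubmonoid hPQ hs ht).eq_zero_of_smul_eq_zero hsg htg

/-- If `P` and `Q` are disjoint sets of primes, then for any abelian group `G` the
map `g ↦ (g ⊗ 1, g ⊗ 1)` from `G` to `(G ⊗ ℤ_P) × (G ⊗ ℤ_Q)` is injective. -/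
theorem localization_pair_injective (P Q : Set ℕ) (hP : ∀ p ∈ P, Nat.Prime p)
    (hQ : ∀ p ∈ Q, Nat.Prime p) (hPQ : Disjoint P Q)
    (G : Type*) [AddCommGroup G] :
    Function.Injective (fun g : G =>
      ((TensorProduct.tmul ℤ g (1 : ratDenSubring P) :
          TensorProduct ℤ G (ratDenSubring P)),
       (TensorProduct.tmul ℤ g (1 : ratDenSubring Q) :
          TensorProduct ℤ G (ratDenSubring Q)))) :=
  localization_pair_injective_general P Q hPQ G
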